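/- arXiv:2506.08431 — 2 statements merged into one kernel-verified Lean document; each statement's English description precedes it below -/
import Mathlib

section
/- In the real numbers with the cofinite topology, the set A = ℝ \ {0} is πg-closed but not g-closed. -/
open Set TopologicalSpace Function

variable {X : Type*} [TopologicalSpace X]

/-- A set is regular open if it equals the interior of its closure. -/
def RegOpen (A : Set X) : Prop := A = interior (closure A)

/-- A set is regular closed if it equals the closure of its interior. -/
def RegClosed (A : Set X) : Prop := A = closure (interior A)

/-- A set is π-open if it is a finite union of regular open sets. -/
def PiOpen (A : Set X) : Prop :=
  ∃ S : Set (Set X), S.Finite ∧ (∀ B ∈ S, RegOpen B) ∧ A = ⋃₀ S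

/-- A set is π-closed if its complement is π-open. -/
def PiClosed (A : Set X) : Prop := PiOpen Aᶜ

def SemiOpen (A : Set X) : Prop := A ⊆ closure (interior A)

def PreOpen (A : Set X) : Prop := A ⊆ interior (closure A)

def SemiPreOpen (A : Set X) : Prop := A ⊆ closure (interior (closure A))

def PreClosed (A : Set X) : Prop := PreOpen Aᶜ

def SemiPreClosed (A : Set X) : Prop := SemiPreOpen Aᶜ

/-- Preclosure: intersection of all preclosed supersets. -/
def pcl (A : Set X) : Set X := ⋂₀ {F | PreClosed F ∧ A ⊆ F}

/-- Semi-preclosure: intersection of all semi-preclosed supersets. -/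
def spcl (A : Set X) : Set X := ⋂₀ {F | SemiPreClosed F ∧ A ⊆ F}

/-- w-closed: closure contained in every semi-open superset. -/
def WClosed (F : Set X) : Prop := ∀ U : Set X, SemiOpen U → F ⊆ U → closure F ⊆ U

def WOpen (A : Set X) : Prop := WClosed Aᶜ

/-- D-closed: pcl(A) ⊆ int(U) whenever A ⊆ U and U is w-open. -/
def DClosed (A : Set X) : Prop := ∀ U : Set X, WOpen U → A ⊆ U → pcl A ⊆ interior U

def DOpen (A : Set X) : Prop := DClosed Aᶜ

/-- D̂-closed: spcl(A) ⊆ U whenever A ⊆ U and U is D-open. -/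
def DHatClosed (A : Set X) : Prop := ∀ U : Set X, DOpen U → A ⊆ U → spcl A ⊆ U

/-- D̂-closure: intersection of all D̂-closed supersets. -/
def DHatCl (A : Set X) : Set X := ⋂₀ {F | DHatClosed F ∧ A ⊆ F}

/-- gD̂-closed: D̂cl(A) ⊆ U whenever A ⊆ U and U is open. -/
def GDHatClosed (A : Set X) : Prop := ∀ U : Set X, IsOpen U → A ⊆ U → DHatCl A ⊆ U

/-- πgD̂-closed: D̂cl(A) ⊆ U whenever A ⊆ U and U is π-open. -/
def PiGDHatClosed (A : Set X) : Prop := ∀ U : Set X, PiOpen U → A ⊆ U → DHatCl A ⊆ U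

/-! An infinite cofinite space is irreducible, so every nonempty open set is dense. Hence its
only regular open sets are `∅` and the whole space, and the only π-open superset of a nonempty
set is the whole space. On the other hand `ℝ \ {0}` is open, dense and proper, so it is an open
superset of itself that does not contain its closure. -/

section PreirreducibleSpace

variable [PreirreducibleSpace X]

theorem RegOpen.eq_empty_or_eq_univ {B : Set X} (h : RegOpen B) : B = ∅ ∨ B = univ := by
  rcases B.eq_empty_or_nonempty with hB | hB
  · exact Or.inl hB
  · have hB_open : IsOpen B := h ▸ isOpen_interior
    right
    rw [h, (hB_open.dense hB).closure_eq, interior_univ]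

theorem PiOpen.eq_univ_of_nonempty {U : Set X} (hU : PiOpen U) (hne : U.Nonempty) :
    U = univ := by
  obtain ⟨S, -, hreg, rfl⟩ := hU
  obtain ⟨x, B, hBS, hxB⟩ := hne
  rcases (hreg B hBS).eq_empty_or_eq_univ with rfl | rfl
  · exact absurd hxB (notMem_empty x)
  · exact eq_univ_of_univ_subset (subset_sUnion_of_mem hBS)

end PreirreducibleSpace

/-- In ℝ with the cofinite topology, A = ℝ \ {0} is πg-closed but not g-closed. -/
theorem stmt3 :
    let A : Set (CofiniteTopology ℝ) := {CofiniteTopology.of (0 : ℝ)}ᶜ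
    (∀ U : Set (CofiniteTopology ℝ), PiOpen U → A ⊆ U → closure A ⊆ U) ∧
    ¬ (∀ U : Set (CofiniteTopology ℝ), IsOpen U → A ⊆ U → closure A ⊆ U) := by
  intro A
  have hA_open : IsOpen A := isOpen_compl_singleton
  have hA_ne : A.Nonempty := ⟨CofiniteTopology.of 1, by simp [A]⟩
  refine ⟨fun U hU hAU => ?_, fun hgClosed => ?_⟩
  · rw [hU.eq_univ_of_nonempty (hA_ne.mono hAU)]
    exact subset_univ _
  · have hcl : closure A ⊆ A := hgClosed A hA_open subset_rfl
    rw [(hA_open.dense hA_ne).closure_eq] at hcl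
    exact hcl (mem_univ _) rfl
end

section
/- If f : X → Y is an open continuous injective function and X is softly πgD̂-normal (with separation by open sets), then the subspace f(X) of Y is softly πgD̂-normal; in particular, soft πgD̂-normality is a topological property (preserved under homeomorphism). -/
open Set TopologicalSpace Function

variable {X : Type*} [TopologicalSpace X]

/-- Softly normal with separation by open sets. -/
def SoftlyNormalOpen (X : Type*) [TopologicalSpace X] : Prop :=
  ∀ A B : Set X, PiClosed A → RegClosed B → Disjoint A B →
    ∃ U V : Set X, IsOpen U ∧ IsOpen V ∧ Disjoint U V ∧ A ⊆ U ∧ B ⊆ V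

lemma regOpen_preimage {Y : Type*} [TopologicalSpace Y] (h : X ≃ₜ Y) {A : Set Y}
    (hA : RegOpen A) : RegOpen (h ⁻¹' A) := by
  unfold RegOpen at *
  rw [← h.preimage_closure, ← h.preimage_interior, ← hA]

lemma regClosed_preimage {Y : Type*} [TopologicalSpace Y] (h : X ≃ₜ Y) {A : Set Y}
    (hA : RegClosed A) : RegClosed (h ⁻¹' A) := by
  unfold RegClosed at *
  rw [← h.preimage_interior, ← h.preimage_closure, ← hA]

lemma piOpen_preimage {Y : Type*} [TopologicalSpace Y] (h : X ≃ₜ Y) {A : Set Y}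
    (hA : PiOpen A) : PiOpen (h ⁻¹' A) := by
  obtain ⟨S, hSfin, hSreg, rfl⟩ := hA
  refine ⟨(h ⁻¹' ·) '' S, hSfin.image _, ?_, ?_⟩
  · rintro B ⟨C, hC, rfl⟩
    exact regOpen_preimage h (hSreg C hC)
  · rw [sUnion_image, preimage_sUnion]

/-- Soft (πgD̂-)normality in the open-separation sense is a topological property. -/
theorem stmt7 {Y : Type*} [TopologicalSpace Y] (h : X ≃ₜ Y)
    (hX : SoftlyNormalOpen X) : SoftlyNormalOpen Y := by
  intro A B hA hB hAB
  have hA' : PiClosed (h ⁻¹' A) := by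
    have := piOpen_preimage h hA
    rwa [Set.preimage_compl] at this
  have hB' : RegClosed (h ⁻¹' B) := regClosed_preimage h hB
  obtain ⟨U, V, hU, hV, hUV, hAU, hBV⟩ :=
    hX _ _ hA' hB' (hAB.preimage _)
  refine ⟨h.symm ⁻¹' U, h.symm ⁻¹' V, hU.preimage h.symm.continuous,
    hV.preimage h.symm.continuous, hUV.preimage _, ?_, ?_⟩
  · intro y hy; exact hAU (show h (h.symm y) ∈ A by simp [hy])
  · intro y hy; exact hBV (show h (h.symm y) ∈ B by simp [hy])
end
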